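/- Let Λ be an abelian group and consider the action of Thompson's group V on the product ∏_{Q₂} Λ over the dyadic rationals Q₂ of [0,1), given by (f^v)(x) = f(v^{-1}x). For ζ ∈ Λ, the map s(ζ) : V → ∏_{Q₂} Λ defined by s(ζ)_v(x) = ζ^{log₂(v'(v^{-1}x))} is a cocycle, i.e., s(ζ)_{vw} = s(ζ)_v · (s(ζ)_w)^v for all v, w ∈ V. -/

import Mathlib

/-! Basic setup: the Cantor space, prefix replacement, Thompson's group `V`,
slopes, dyadic rationals, standard dyadic partitions, locally constant maps,
and the permutation model of the twisted fraction groups `LΓ ⋊ V`. -/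

abbrev Cantor : Type := ℕ → Bool

/-- Concatenation of a finite word with an infinite sequence. -/
def cat (w : List Bool) (x : Cantor) : Cantor :=
  fun n => if n < w.length then w.getD n false else x (n - w.length)

/-- The standard dyadic interval (cylinder) associated to a finite word. -/
def cyl (w : List Bool) : Set Cantor := {x | ∃ y : Cantor, x = cat w y}

/-- Membership in Thompson's group `V`: a homeomorphism of the Cantor space which is
everywhere locally given by prefix replacement. -/
def memV (v : Cantor ≃ₜ Cantor) : Prop :=
  ∀ x : Cantor, ∃ (m w : List Bool) (y : Cantor),
    x = cat m y ∧ ∀ z : Cantor, v (cat m z) = cat w z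

/-- `HasLogSlope v x k` : `k = log₂ v'(x)`, base-2 logarithm of the slope of `v` at `x`. -/
def HasLogSlope (v : Cantor ≃ₜ Cantor) (x : Cantor) (k : ℤ) : Prop :=
  ∃ (m w : List Bool) (y : Cantor),
    x = cat m y ∧ (∀ z : Cantor, v (cat m z) = cat w z) ∧
      k = (m.length : ℤ) - (w.length : ℤ)

open Classical in
noncomputable def logSlope (v : Cantor ≃ₜ Cantor) (x : Cantor) : ℤ :=
  if h : ∃ k : ℤ, HasLogSlope v x k then h.choose else 0

/-- The eventually periodic sequence `c∞ = c·c·c⋯`. -/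
def tailSeq (c : List Bool) : Cantor := fun n => c.getD (n % c.length) false

/-- `x` lies in the tail equivalence class of the word `c`, i.e. `x = y·c∞`. -/
def InTailClass (x : Cantor) (c : List Bool) : Prop :=
  ∃ y : List Bool, x = cat y (tailSeq c)

/-- `x` is eventually periodic (a rational point of the Cantor space). -/
def EvPeriodic (x : Cantor) : Prop :=
  ∃ (y c : List Bool), c ≠ [] ∧ x = cat y (tailSeq c)

/-- A prime word: a nonempty word which is not a proper power of a word. -/
def PrimeWord (c : List Bool) : Prop :=
  c ≠ [] ∧ ∀ (d : List Bool) (k : ℕ), 2 ≤ k → c ≠ (List.replicate k d).flatten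

/-- `conjH φ v = φ ∘ v ∘ φ⁻¹`. -/
def conjH (φ v : Cantor ≃ₜ Cantor) : Cantor ≃ₜ Cantor := φ.symm.trans (v.trans φ)

/-- `φ` normalizes Thompson's group `V` inside `Homeo(𝔠)` : `φ V φ⁻¹ = V`. -/
def NormalizesV (φ : Cantor ≃ₜ Cantor) : Prop :=
  (conjH φ) '' {v | memV v} = {v | memV v}

/-- The copy of the dyadic rationals `Q₂ ⊂ 𝔠` : finitely supported sequences. -/
def InQ2 (x : Cantor) : Prop := ∃ n : ℕ, ∀ m, n ≤ m → x m = false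

def zeroSeq : Cantor := fun _ => false

/-- A standard dyadic partition of the Cantor space. -/
def IsSDP (P : Finset (List Bool)) : Prop :=
  ∀ x : Cantor, ∃! w : List Bool, w ∈ P ∧ x ∈ cyl w

/-- Locally constant map: constant on each piece of some standard dyadic partition. -/
def IsLC {Γ : Type*} (f : Cantor → Γ) : Prop :=
  ∃ P : Finset (List Bool), IsSDP P ∧ ∀ w ∈ P, ∀ y z : Cantor, f (cat w y) = f (cat w z)

/-- `h` agrees on `Q₂` with (the restriction of) a locally constant map. -/
def AgreesOnQ2WithLC {Γ : Type*} (h : Cantor → Γ) : Prop :=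
  ∃ b : Cantor → Γ, IsLC b ∧ ∀ x, InQ2 x → h x = b x

section GroupPart
variable {Γ : Type*} [Group Γ]

/-- `alphaWord α₀ α₁ (m₁⋯m_k) = α_{m_k} ∘ ⋯ ∘ α_{m₁}`. -/
def alphaWord (α₀ α₁ : Γ ≃* Γ) (m : List Bool) : Γ ≃* Γ :=
  m.foldl (fun acc b => acc.trans (if b then α₁ else α₀)) (MulEquiv.refl Γ)

open Classical in
/-- The twisting automorphism `τ_{v,x} = α_{v(I)}⁻¹ ∘ α_I` for a standard dyadic
interval `I` containing `x` and adapted to `v`. -/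
noncomputable def tauEquiv (α₀ α₁ : Γ ≃* Γ) (v : Cantor ≃ₜ Cantor) (x : Cantor) : Γ ≃* Γ :=
  if h : ∃ p : List Bool × List Bool, x ∈ cyl p.1 ∧ ∀ z : Cantor, v (cat p.1 z) = cat p.2 z
  then (alphaWord α₀ α₁ h.choose.1).trans (alphaWord α₀ α₁ h.choose.2).symm
  else MulEquiv.refl Γ

/-- The element `a·v` of the twisted `LΓ ⋊ V`, realized as the permutation
`(x,g) ↦ (v x, a(v x) · τ_{v,x}(g))` of `𝔠 × Γ`. -/
noncomputable def permOf (α₀ α₁ : Γ ≃* Γ) (a : Cantor → Γ) (v : Cantor ≃ₜ Cantor) :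
    Equiv.Perm (Cantor × Γ) where
  toFun p := (v p.1, a (v p.1) * tauEquiv α₀ α₁ v p.1 p.2)
  invFun p := (v.symm p.1, (tauEquiv α₀ α₁ v (v.symm p.1)).symm ((a p.1)⁻¹ * p.2))
  left_inv := by rintro ⟨x, g⟩; simp
  right_inv := by rintro ⟨x, g⟩; simp

end GroupPart

/-- The twisted fraction group `G = LΓ ⋊ V` of the triple `(Γ, α₀, α₁)`,
as a group of permutations of `𝔠 × Γ`. -/
noncomputable def Gsub (Γ : Type*) [Group Γ] (α₀ α₁ : Γ ≃* Γ) :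
    Subgroup (Equiv.Perm (Cantor × Γ)) :=
  Subgroup.closure {p | ∃ a v, IsLC a ∧ memV v ∧ p = permOf α₀ α₁ a v}

/-- The untwisted case `α₀ = α₁ = id`. -/
noncomputable def permOfU {Γ : Type*} [Group Γ] (a : Cantor → Γ) (v : Cantor ≃ₜ Cantor) :=
  permOf (MulEquiv.refl Γ) (MulEquiv.refl Γ) a v

/-- The untwisted fraction group `G = LΓ ⋊ V`. -/
noncomputable def GsubU (Γ : Type*) [Group Γ] := Gsub Γ (MulEquiv.refl Γ) (MulEquiv.refl Γ)

/-- `f ∈ N_{K̄}(G)` : the element `f` of `K̄ = ∏_{Q₂}Γ` normalizes `G = LΓ ⋊ V`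
(untwisted case), i.e. `f·a·(f^v)⁻¹` and `f⁻¹·a·f^v` are locally constant on `Q₂`. -/
def InNormKbar {Γ : Type*} [Group Γ] (f : Cantor → Γ) : Prop :=
  ∀ (a : Cantor → Γ) (v : Cantor ≃ₜ Cantor), IsLC a → memV v →
    AgreesOnQ2WithLC (fun x => f x * a x * (f (v.symm x))⁻¹) ∧
    AgreesOnQ2WithLC (fun x => (f x)⁻¹ * a x * f (v.symm x))

/-! The local prefix-replacement forms `cat m z ↦ cat u z` of `v` near a point are all
refinements `cat (m ++ t) z ↦ cat (u ++ t) z` of the shortest one, so `|m| - |u|` does not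
depend on the form chosen. Composing forms of `w` at `x` and of `v` at `w x`, after refining
one of them so that the image word of the first is the domain word of the second, gives a
form of `w.trans v` at `x`; hence log-slopes add under composition. -/

section Cat

lemma cat_apply_of_lt {w : List Bool} {n : ℕ} (x : Cantor) (h : n < w.length) :
    cat w x n = w[n] := by
  simp [cat, h]

lemma cat_apply_add_length (w : List Bool) (x : Cantor) (n : ℕ) :
    cat w x (n + w.length) = x n := by
  simp [cat]

lemma cat_append (a b : List Bool) (z : Cantor) : cat (a ++ b) z = cat a (cat b z) := by
  funext n
  simp only [cat, List.length_append]
  rcases lt_or_ge n a.length with h | h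
  · simp [h, Nat.lt_of_lt_of_le h (Nat.le_add_right _ _)]
  · have hsub : n - a.length < b.length ↔ n < a.length + b.length := by omega
    simp [Nat.not_lt.2 h, hsub, List.getD, List.getElem?_append_right h, Nat.sub_sub]

lemma cat_eq_cat_of_length_eq {a b : List Bool} {y y' : Cantor} (hlen : a.length = b.length)
    (h : cat a y = cat b y') : a = b ∧ y = y' := by
  refine ⟨List.ext_getElem hlen fun n ha hb => ?_, funext fun n => ?_⟩
  · rw [← cat_apply_of_lt y ha, ← cat_apply_of_lt y' hb, h]
  · rw [← cat_apply_add_length a y, ← cat_apply_add_length b y', h, hlen]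

lemma exists_append_of_cat_eq_cat {a b : List Bool} {y y' : Cantor}
    (hlen : a.length ≤ b.length) (h : cat a y = cat b y') :
    ∃ t, b = a ++ t ∧ y = cat t y' := by
  rw [← List.take_append_drop a.length b, cat_append] at h
  obtain ⟨hab, hy⟩ := cat_eq_cat_of_length_eq (by simp [hlen]) h
  exact ⟨b.drop a.length, by nth_rw 1 [← List.take_append_drop a.length b, ← hab], hy⟩

lemma eq_of_forall_cat_eq_cat {a b : List Bool} (h : ∀ z, cat a z = cat b z) : a = b := by
  suffices hlen : a.length = b.length from
    (cat_eq_cat_of_length_eq hlen (h fun _ => false)).1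
  wlog hle : a.length ≤ b.length generalizing a b
  · exact (this (fun z => (h z).symm) (le_of_not_ge hle)).symm
  by_contra hne
  have hlt : a.length < b.length := lt_of_le_of_ne hle hne
  -- the bit at position `|a|` of `cat b z` is `b[|a|]`, whatever `z` is
  have hbit (c : Bool) : c = b[a.length] := by
    rw [← cat_apply_add_length a (fun _ => c) 0, Nat.zero_add, h, cat_apply_of_lt _ hlt]
  exact Bool.true_eq_false.mp ((hbit true).trans (hbit false).symm)

end Cat

section LogSlope

variable {v w : Cantor ≃ₜ Cantor} {x : Cantor} {k k' : ℤ}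

lemma map_cat_append {m u : List Bool} (hv : ∀ z, v (cat m z) = cat u z) (t : List Bool)
    (z : Cantor) : v (cat (m ++ t) z) = cat (u ++ t) z := by
  rw [cat_append, hv, cat_append]

theorem HasLogSlope.unique (h : HasLogSlope v x k) (h' : HasLogSlope v x k') : k = k' := by
  obtain ⟨m, u, y, rfl, hv, rfl⟩ := h
  obtain ⟨m', u', y', hx, hv', rfl⟩ := h'
  wlog hle : m.length ≤ m'.length generalizing m u y m' u' y'
  · exact (this m' u' y' hv' m u y hx.symm hv (le_of_not_ge hle)).symm
  obtain ⟨t, rfl, -⟩ := exists_append_of_cat_eq_cat hle hx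
  obtain rfl : u ++ t = u' :=
    eq_of_forall_cat_eq_cat fun z => by rw [← hv', map_cat_append hv]
  simp only [List.length_append, Nat.cast_add]
  ring

theorem HasLogSlope.trans {kv kw : ℤ} (hw : HasLogSlope w x kw) (hv : HasLogSlope v (w x) kv) :
    HasLogSlope (w.trans v) x (kv + kw) := by
  obtain ⟨m', u, y', rfl, hw, rfl⟩ := hw
  obtain ⟨m, u', y, hx, hv, rfl⟩ := hv
  rw [hw] at hx
  rcases le_total m.length u.length with hle | hle
  · obtain ⟨t, rfl, -⟩ := exists_append_of_cat_eq_cat hle hx.symm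
    refine ⟨m', u' ++ t, y', rfl, fun z => ?_, ?_⟩
    · rw [Homeomorph.trans_apply, hw, map_cat_append hv]
    · simp only [List.length_append, Nat.cast_add]
      ring
  · obtain ⟨t, rfl, rfl⟩ := exists_append_of_cat_eq_cat hle hx
    refine ⟨m' ++ t, u', y, (cat_append m' t y).symm, fun z => ?_, ?_⟩
    · rw [Homeomorph.trans_apply, map_cat_append hw, hv]
    · simp only [List.length_append, Nat.cast_add]
      ring

end LogSlope

theorem slope_cocycle_general (Λ : Type*) [CommGroup Λ] (ζ : Λ)
    (v w : Cantor ≃ₜ Cantor)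
    (x : Cantor) (k kv kw : ℤ)
    (hk : HasLogSlope (w.trans v) ((w.trans v).symm x) k)
    (hkv : HasLogSlope v (v.symm x) kv)
    (hkw : HasLogSlope w (w.symm (v.symm x)) kw) :
    ζ ^ k = ζ ^ kv * ζ ^ kw := by
  have hcomp : HasLogSlope (w.trans v) ((w.trans v).symm x) (kv + kw) :=
    hkw.trans (by rwa [Homeomorph.apply_symm_apply])
  rw [hk.unique hcomp, zpow_add]

/-- For an abelian group `Λ` and `ζ ∈ Λ`, the map
`s(ζ)_v(x) = ζ^{log₂ v'(v⁻¹x)}` is a cocycle for the action of `V` on `∏_{Q₂} Λ` :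
`s(ζ)_{vw} = s(ζ)_v · (s(ζ)_w)^v`.  (Stated pointwise at `x ∈ Q₂` in terms of the
base-2 logarithms of the slopes; note `vw = w.trans v` as homeomorphisms.) -/
theorem slope_cocycle (Λ : Type*) [CommGroup Λ] (ζ : Λ)
    (v w : Cantor ≃ₜ Cantor) (hv : memV v) (hw : memV w)
    (x : Cantor) (hx : InQ2 x) (k kv kw : ℤ)
    (hk : HasLogSlope (w.trans v) ((w.trans v).symm x) k)
    (hkv : HasLogSlope v (v.symm x) kv)
    (hkw : HasLogSlope w (w.symm (v.symm x)) kw) :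
    ζ ^ k = ζ ^ kv * ζ ^ kw :=
  slope_cocycle_general Λ ζ v w x k kv kw hk hkv hkw
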